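/- For each 0 < α ≤ 1 there exists t = t(α) ≥ 1 such that the following holds: if x₀, y₀ ∈ ℝⁿ and r_x, r_y > 0 satisfy B(x₀, t r_x) ∩ B(y₀, t r_y) = ∅ and y₀ ∈ X⁺(x₀, θ, α/t) for some θ ∈ S^{n-1}, then B(y₀, r_y) ⊂ X⁺(x, θ, α) for every x ∈ B(x₀, r_x). -/

import Mathlib

set_option maxHeartbeats 1000000


open MeasureTheory Metric Filter Set
open scoped RealInnerProductSpace

/-- The one-sided open cone `X⁺(x,θ,α) = {y : (y-x)·θ > (1-α²)^{1/2}|y-x|}`. -/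
def oneSidedCone {n : ℕ} (x θ : EuclideanSpace ℝ (Fin n)) (α : ℝ) :
    Set (EuclideanSpace ℝ (Fin n)) :=
  {y | Real.sqrt (1 - α ^ 2) * ‖y - x‖ < ⟪y - x, θ⟫}

/-- Cone separation lemma. -/
theorem stmt6 (α : ℝ) (hα0 : 0 < α) (hα1 : α ≤ 1) :
    ∃ t : ℝ, 1 ≤ t ∧
      ∀ (n : ℕ) (x₀ y₀ : EuclideanSpace ℝ (Fin n)) (r_x r_y : ℝ), 0 < r_x → 0 < r_y →
        Disjoint (closedBall x₀ (t * r_x)) (closedBall y₀ (t * r_y)) →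
        ∀ θ : EuclideanSpace ℝ (Fin n), ‖θ‖ = 1 →
          y₀ ∈ oneSidedCone x₀ θ (α / t) →
          ∀ x ∈ closedBall x₀ r_x, closedBall y₀ r_y ⊆ oneSidedCone x θ α := by
  have hα2 : α ^ 2 ≤ 1 := by nlinarith
  refine ⟨8 / α ^ 2, ?_, ?_⟩
  · rw [le_div_iff₀ (by positivity)]; nlinarith
  set t : ℝ := 8 / α ^ 2 with ht
  have ht0 : 0 < t := by positivity
  have ht1 : 1 ≤ t := by rw [ht, le_div_iff₀ (by positivity)]; nlinarith
  intro n x₀ y₀ r_x r_y hrx hry hdisj θ hθ hcone x hx y hy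
  simp only [oneSidedCone, Set.mem_setOf_eq] at hcone ⊢
  have hα6 : α ^ 6 ≤ α ^ 2 := by nlinarith [pow_le_one₀ hα0.le hα1 (n := 4), sq_nonneg α]
  -- notation
  set c : ℝ := Real.sqrt (1 - α ^ 2) with hc
  set s : ℝ := Real.sqrt (1 - (α / t) ^ 2) with hs
  have hαt : α / t = α ^ 3 / 8 := by
    rw [ht]; field_simp
  have hαt1 : (α / t) ^ 2 ≤ 1 := by
    rw [hαt]; nlinarith [hα6]
  have hc0 : 0 ≤ c := Real.sqrt_nonneg _
  have hc1 : c ≤ 1 := by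
    rw [hc]; exact Real.sqrt_le_one.mpr (by nlinarith)
  have hs1 : s ≤ 1 := by
    rw [hs]; exact Real.sqrt_le_one.mpr (by nlinarith)
  have hs0 : 0 ≤ s := Real.sqrt_nonneg _
  have hcsq : c ^ 2 = 1 - α ^ 2 := Real.sq_sqrt (by nlinarith)
  have hssq : s ^ 2 = 1 - (α / t) ^ 2 := Real.sq_sqrt (by nlinarith)
  -- key scalar inequality : α^2/4 ≤ s - c
  have hkey : α ^ 2 / 4 ≤ s - c := by
    have hsc : c ≤ s := by
      rw [hc, hs]
      apply Real.sqrt_le_sqrt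
      rw [hαt]; nlinarith [hα6]
    have hdiff : (s - c) * (s + c) = α ^ 2 - (α ^ 3 / 8) ^ 2 := by
      have : (s - c) * (s + c) = s ^ 2 - c ^ 2 := by ring
      rw [this, hcsq, hssq, hαt]; ring
    nlinarith [sq_nonneg α, sq_nonneg (α ^ 2), sq_nonneg (α ^ 3)]
  have htsc : 2 ≤ t * (s - c) := by
    rw [ht]
    rw [div_mul_eq_mul_div, le_div_iff₀ (by positivity)]
    nlinarith
  -- distances
  have hdist : t * r_x + t * r_y < dist x₀ y₀ := by
    rw [← disjoint_closedBall_closedBall_iff (by positivity) (by positivity)]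
    exact hdisj
  set u : EuclideanSpace ℝ (Fin n) := y₀ - x₀ with hu
  set v : EuclideanSpace ℝ (Fin n) := y - x with hv
  set D : ℝ := ‖u‖ with hD
  set d : ℝ := r_x + r_y with hd
  have hd0 : 0 < d := by positivity
  have htD : t * d < D := by
    have : D = dist x₀ y₀ := by rw [hD, hu, dist_comm, dist_eq_norm]
    rw [this, hd]; linarith [hdist]
  have hvu : ‖v - u‖ ≤ d := by
    have h1 : v - u = (y - y₀) - (x - x₀) := by
      rw [hv, hu]; abel
    rw [h1]
    calc ‖(y - y₀) - (x - x₀)‖ ≤ ‖y - y₀‖ + ‖x - x₀‖ := norm_sub_le _ _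
      _ ≤ r_y + r_x := by
          gcongr
          · exact mem_closedBall_iff_norm.mp hy
          · exact mem_closedBall_iff_norm.mp hx
      _ = d := by rw [hd]; ring
  have hconed : s * D < ⟪u, θ⟫ := hcone
  have hinn : ⟪u, θ⟫ - d ≤ ⟪v, θ⟫ := by
    have h1 : ⟪v, θ⟫ = ⟪u, θ⟫ + ⟪v - u, θ⟫ := by
      rw [← inner_add_left]; congr 1; abel
    have h2 : -(d) ≤ ⟪v - u, θ⟫ := by
      have := abs_real_inner_le_norm (v - u) θ
      rw [hθ, mul_one] at this
      have := neg_le_of_abs_le this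
      linarith [hvu]
    linarith
  have hnv : ‖v‖ ≤ D + d := by
    calc ‖v‖ = ‖u + (v - u)‖ := by congr 1; abel
      _ ≤ ‖u‖ + ‖v - u‖ := norm_add_le _ _
      _ ≤ D + d := by rw [hD]; linarith
  -- conclude
  have hD0 : 0 ≤ D := norm_nonneg _
  have hmain : c * (D + d) < s * D - d := by
    have h1 : (s - c) * D > (s - c) * (t * d) := by
      apply mul_lt_mul_of_pos_left htD
      nlinarith
    have h2 : (s - c) * (t * d) ≥ 2 * d := by
      have : (s - c) * (t * d) = (t * (s - c)) * d := by ring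
      rw [this]
      exact mul_le_mul_of_nonneg_right htsc hd0.le
    nlinarith
  calc c * ‖y - x‖ ≤ c * (D + d) := by
        apply mul_le_mul_of_nonneg_left _ hc0
        exact hnv
    _ < s * D - d := hmain
    _ < ⟪u, θ⟫ - d := by linarith
    _ ≤ ⟪v, θ⟫ := hinn
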